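/- Sufficiency of the restricted discrete fractional Euler–Lagrange equations: let x_d, y_d : Fin (N+1) → ℝ^d with fixed endpoints, and consider the discrete action S_d(x_d, y_d) = ∑_{k=0}^{N-1} (L_d(x_k, x_{k+1}) + L_d(y_k, y_{k+1})) − μ h ∑_{k=0}^{N} (J₋^{-α} x)_k · (J₊^{-β} y)_k. If for all k = 1,...,N−1 the equations D₁L_d(x_k, x_{k+1}) + D₂L_d(x_{k-1}, x_k) = μ h (J₋^{-(α+β)} x)_k and D₁L_d(y_k, y_{k+1}) + D₂L_d(y_{k-1}, y_k) = μ h (J₊^{-(α+β)} y)_k hold, then the restricted first variation vanishes: d/dε|_{ε=0} S_d(x_d + ε δx, y_d + ε δx) = 0 for all variations δx with δx_0 = δx_N = 0. -/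

import Mathlib

/-- Backward discrete convolution `(J₋ x)_k = ∑_{n=0}^k ω_n x_{k-n}`. -/
noncomputable def Jm {d : ℕ} (w : ℕ → ℝ) (x : ℕ → EuclideanSpace ℝ (Fin d)) (k : ℕ) :
    EuclideanSpace ℝ (Fin d) :=
  ∑ n ∈ Finset.range (k + 1), w n • x (k - n)

/-- Forward discrete convolution `(J₊ y)_k = ∑_{n=0}^{N-k} ω_n y_{k+n}`. -/
noncomputable def Jp {d : ℕ} (N : ℕ) (w : ℕ → ℝ) (y : ℕ → EuclideanSpace ℝ (Fin d)) (k : ℕ) :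
    EuclideanSpace ℝ (Fin d) :=
  ∑ n ∈ Finset.range (N - k + 1), w n • y (k + n)

/-!
Along the variation, each Lagrangian sum has derivative
`∑ₖ (D₁L_d(z_k, z_{k+1}) + D₂L_d(z_{k-1}, z_k)) δx_k` (`z = x, y`) after summation by parts, the
boundary terms vanishing since `δx 0 = δx N = 0`. The coupling term has derivative
`∑ₖ ⟪J₋^{-α} x, J₊^{-β} δx⟫ + ⟪J₋^{-α} δx, J₊^{-β} y⟫`; as `J₊` is the adjoint of `J₋` for the
pairing `∑_{k=0}^{N}` and the Cauchy-product identity turns `J^{-β} ∘ J^{-α}` into `J^{-(α+β)}`,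
it equals `∑ₖ ⟪J₋^{-(α+β)} x + J₊^{-(α+β)} y, δx_k⟫`. The Euler–Lagrange equations cancel the
two sums term by term.
-/

open Finset

section Calculus

variable {𝕜 E F G : Type*} [NontriviallyNormedField 𝕜]
  [NormedAddCommGroup E] [NormedSpace 𝕜 E] [NormedAddCommGroup F] [NormedSpace 𝕜 F]
  [NormedAddCommGroup G] [NormedSpace 𝕜 G]

theorem hasDerivAt_add_smul (a u : E) : HasDerivAt (fun ε : 𝕜 => a + ε • u) u 0 := by
  simpa using ((hasDerivAt_id (0 : 𝕜)).smul_const u).const_add a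

theorem hasDerivAt_apply_add_smul_apply_add_smul {f : E → F → G} {a : E} {b : F}
    (hf : DifferentiableAt 𝕜 (fun p : E × F => f p.1 p.2) (a, b)) (u : E) (v : F) :
    HasDerivAt (fun ε : 𝕜 => f (a + ε • u) (b + ε • v))
      (fderiv 𝕜 (fun a' => f a' b) a u + fderiv 𝕜 (fun b' => f a b') b v) 0 := by
  set D := fderiv 𝕜 (fun p : E × F => f p.1 p.2) (a, b)
  have hF : HasFDerivAt (fun p : E × F => f p.1 p.2) D (a, b) := hf.hasFDerivAt
  have hleft : HasFDerivAt (fun a' => f a' b) (D.comp (.inl 𝕜 E F)) a :=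
    hF.comp (g := fun p : E × F => f p.1 p.2) a
      (hasFDerivAt_prodMk_left (𝕜 := 𝕜) a b)
  have hright : HasFDerivAt (fun b' => f a b') (D.comp (.inr 𝕜 E F)) b :=
    hF.comp (g := fun p : E × F => f p.1 p.2) b
      (hasFDerivAt_prodMk_right (𝕜 := 𝕜) a b)
  have hline : HasDerivAt (fun ε : 𝕜 => (a + ε • u, b + ε • v)) (u, v) 0 :=
    (hasDerivAt_add_smul a u).prodMk (hasDerivAt_add_smul b v)
  rw [hleft.fderiv, hright.fderiv]
  simp only [ContinuousLinearMap.coe_comp, Function.comp_apply,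
    ContinuousLinearMap.inl_apply, ContinuousLinearMap.inr_apply, ← map_add,
    Prod.mk_add_mk, add_zero, zero_add]
  exact hF.comp_hasDerivAt_of_eq 0 hline (by simp)

end Calculus

theorem hasDerivAt_inner_add_smul {E : Type*} [NormedAddCommGroup E] [InnerProductSpace ℝ E]
    (a u b v : E) :
    HasDerivAt (fun ε : ℝ => (inner ℝ (a + ε • u) (b + ε • v) : ℝ))
      (inner ℝ a v + inner ℝ u b) 0 := by
  simpa using (hasDerivAt_add_smul a u).inner ℝ (hasDerivAt_add_smul b v)

theorem sum_range_add_shift {M : Type*} [AddCommMonoid M] (a b : ℕ → M) {N : ℕ}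
    (ha : a N = 0) (hb : b 0 = 0) :
    ∑ k ∈ range N, (a k + b (k + 1)) = ∑ k ∈ range (N + 1), (a k + b k) := by
  rw [sum_add_distrib, sum_add_distrib, sum_range_succ a, sum_range_succ' b, ha, hb,
    add_zero, add_zero]

theorem sum_range_mul_sub_comm {R : Type*} [CommSemiring R] (a b : ℕ → R) (n : ℕ) :
    ∑ j ∈ range (n + 1), a j * b (n - j) = ∑ j ∈ range (n + 1), b j * a (n - j) := by
  rw [← sum_range_reflect]
  refine sum_congr rfl fun j hj => ?_
  rw [mem_range] at hj
  rw [mul_comm, show n + 1 - 1 - j = n - j by omega, show n - (n - j) = j by omega]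

section Convolution

variable {d : ℕ}

theorem Jm_add_smul (w : ℕ → ℝ) (x δ : ℕ → EuclideanSpace ℝ (Fin d)) (ε : ℝ) (k : ℕ) :
    Jm w (fun j => x j + ε • δ j) k = Jm w x k + ε • Jm w δ k := by
  simp only [Jm, smul_add, sum_add_distrib, smul_sum, smul_comm ε]

theorem Jp_add_smul (N : ℕ) (w : ℕ → ℝ) (y δ : ℕ → EuclideanSpace ℝ (Fin d)) (ε : ℝ) (k : ℕ) :
    Jp N w (fun j => y j + ε • δ j) k = Jp N w y k + ε • Jp N w δ k := by
  simp only [Jp, smul_add, sum_add_distrib, smul_sum, smul_comm ε]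

theorem Jm_eq_sum_range_reflect (w : ℕ → ℝ) (x : ℕ → EuclideanSpace ℝ (Fin d)) (k : ℕ) :
    Jm w x k = ∑ j ∈ range (k + 1), w (k - j) • x j := by
  rw [Jm, ← sum_range_reflect]
  refine sum_congr rfl fun j hj => ?_
  rw [mem_range] at hj
  rw [show k + 1 - 1 - j = k - j by omega, show k - (k - j) = j by omega]

theorem sum_inner_Jm_eq_sum_inner_Jp (N : ℕ) (w : ℕ → ℝ)
    (u v : ℕ → EuclideanSpace ℝ (Fin d)) :
    ∑ k ∈ range (N + 1), (inner ℝ (Jm w u k) (v k) : ℝ)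
      = ∑ k ∈ range (N + 1), (inner ℝ (u k) (Jp N w v k) : ℝ) := by
  simp only [Jm_eq_sum_range_reflect, Jp, sum_inner, inner_sum, real_inner_smul_left,
    real_inner_smul_right]
  convert sum_range_diag_flip (N + 1) fun j m => w m * (inner ℝ (u j) (v (j + m)) : ℝ)
    using 2 with k _ k hk
  · refine sum_congr rfl fun j hj => ?_
    rw [mem_range] at hj
    rw [Nat.add_sub_cancel' (by omega)]
  · rw [mem_range] at hk
    rw [show N - k + 1 = N + 1 - k by omega]

theorem Jm_Jm (w₁ w₂ w : ℕ → ℝ) (hw : ∀ n, ∑ j ∈ range (n + 1), w₁ j * w₂ (n - j) = w n)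
    (x : ℕ → EuclideanSpace ℝ (Fin d)) (k : ℕ) :
    Jm w₁ (Jm w₂ x) k = Jm w x k := by
  simp only [Jm, smul_sum, smul_smul]
  convert (sum_range_diag_flip (k + 1) fun n m => (w₁ n * w₂ m) • x (k - (n + m))).symm
    using 2 with n hn s _
  · rw [mem_range] at hn
    rw [show k + 1 - n = k - n + 1 by omega]
    simp only [Nat.sub_sub]
  · rw [← hw s, sum_smul]
    refine sum_congr rfl fun j hj => ?_
    rw [mem_range] at hj
    rw [Nat.add_sub_cancel' (by omega)]

theorem Jp_Jp (N : ℕ) (w₁ w₂ w : ℕ → ℝ)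
    (hw : ∀ n, ∑ j ∈ range (n + 1), w₁ j * w₂ (n - j) = w n)
    (y : ℕ → EuclideanSpace ℝ (Fin d)) (k : ℕ) :
    Jp N w₁ (Jp N w₂ y) k = Jp N w y k := by
  simp only [Jp, smul_sum, smul_smul]
  convert (sum_range_diag_flip (N - k + 1) fun m n => (w₁ m * w₂ n) • y (k + (m + n))).symm
    using 2 with m hm s _
  · rw [mem_range] at hm
    rw [show N - (k + m) + 1 = N - k + 1 - m by omega]
    simp only [add_assoc]
  · rw [← hw s, sum_smul]
    refine sum_congr rfl fun j hj => ?_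
    rw [mem_range] at hj
    rw [Nat.add_sub_cancel' (by omega)]

end Convolution

theorem hasDerivAt_sum_lagrangian {E : Type*} [NormedAddCommGroup E] [NormedSpace ℝ E]
    (L : E → E → ℝ) (hL : Differentiable ℝ fun p : E × E => L p.1 p.2) (z δ : ℕ → E) {N : ℕ}
    (h0 : δ 0 = 0) (hN : δ N = 0) :
    HasDerivAt (fun ε : ℝ => ∑ k ∈ range N, L (z k + ε • δ k) (z (k + 1) + ε • δ (k + 1)))
      (∑ k ∈ range (N + 1), (fderiv ℝ (fun a => L a (z (k + 1))) (z k) (δ k)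
        + fderiv ℝ (fun b => L (z (k - 1)) b) (z k) (δ k))) 0 :=
  (HasDerivAt.fun_sum fun _ _ =>
      hasDerivAt_apply_add_smul_apply_add_smul (hL _) _ _).congr_deriv <|
    sum_range_add_shift (fun k => fderiv ℝ (fun a => L a (z (k + 1))) (z k) (δ k))
      (fun k => fderiv ℝ (fun b => L (z (k - 1)) b) (z k) (δ k))
      (by simp only [hN, map_zero])
      -- at `k = 0` the truncated `k - 1` is `0`, but the term dies with `δ 0 = 0`
      (by simp only [h0, map_zero])

theorem hasDerivAt_sum_inner_Jm_Jp {d : ℕ} (N : ℕ) (ωa ωb ωab : ℕ → ℝ)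
    (hcauchy : ∀ n, ∑ j ∈ range (n + 1), ωa j * ωb (n - j) = ωab n)
    (x y δ : ℕ → EuclideanSpace ℝ (Fin d)) :
    HasDerivAt (fun ε : ℝ => ∑ k ∈ range (N + 1),
        (inner ℝ (Jm ωa (fun j => x j + ε • δ j) k) (Jp N ωb (fun j => y j + ε • δ j) k) : ℝ))
      (∑ k ∈ range (N + 1), ((inner ℝ (Jm ωab x k) (δ k) : ℝ) + inner ℝ (Jp N ωab y k) (δ k)))
      0 := by
  simp only [Jm_add_smul, Jp_add_smul]
  refine (HasDerivAt.fun_sum fun _ _ => hasDerivAt_inner_add_smul _ _ _ _).congr_deriv ?_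
  have hcauchy' n := (sum_range_mul_sub_comm ωa ωb n).symm.trans (hcauchy n)
  rw [sum_add_distrib, sum_add_distrib, ← sum_inner_Jm_eq_sum_inner_Jp N ωb (Jm ωa x),
    sum_inner_Jm_eq_sum_inner_Jp N ωa δ (Jp N ωb y)]
  simp only [Jm_Jm ωb ωa ωab hcauchy', Jp_Jp N ωa ωb ωab hcauchy, real_inner_comm (δ _)]

theorem restricted_discrete_EL_sufficient_general {d N : ℕ} (μ h : ℝ)
    (Ld : EuclideanSpace ℝ (Fin d) → EuclideanSpace ℝ (Fin d) → ℝ)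
    (hLd : Differentiable ℝ
      (fun p : EuclideanSpace ℝ (Fin d) × EuclideanSpace ℝ (Fin d) => Ld p.1 p.2))
    (ωa ωb ωab : ℕ → ℝ)
    (hcauchy : ∀ n, ∑ j ∈ Finset.range (n + 1), ωa j * ωb (n - j) = ωab n)
    (x y : ℕ → EuclideanSpace ℝ (Fin d))
    (hELx : ∀ k, 1 ≤ k → k ≤ N - 1 → ∀ v : EuclideanSpace ℝ (Fin d),
      fderiv ℝ (fun a => Ld a (x (k + 1))) (x k) v
          + fderiv ℝ (fun b => Ld (x (k - 1)) b) (x k) v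
        = μ * h * (inner ℝ (Jm ωab x k) v : ℝ))
    (hELy : ∀ k, 1 ≤ k → k ≤ N - 1 → ∀ v : EuclideanSpace ℝ (Fin d),
      fderiv ℝ (fun a => Ld a (y (k + 1))) (y k) v
          + fderiv ℝ (fun b => Ld (y (k - 1)) b) (y k) v
        = μ * h * (inner ℝ (Jp N ωab y k) v : ℝ)) :
    ∀ δx : ℕ → EuclideanSpace ℝ (Fin d), δx 0 = 0 → δx N = 0 →
      HasDerivAt (fun ε : ℝ =>
        (∑ k ∈ Finset.range N,
          (Ld (x k + ε • δx k) (x (k + 1) + ε • δx (k + 1))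
            + Ld (y k + ε • δx k) (y (k + 1) + ε • δx (k + 1))))
        - μ * h * ∑ k ∈ Finset.range (N + 1),
            (inner ℝ (Jm ωa (fun j => x j + ε • δx j) k)
                   (Jp N ωb (fun j => y j + ε • δx j) k) : ℝ)) 0 0 := by
  intro δ hδ0 hδN
  have hLag := (hasDerivAt_sum_lagrangian Ld hLd x δ hδ0 hδN).add
    (hasDerivAt_sum_lagrangian Ld hLd y δ hδ0 hδN)
  have hInt := (hasDerivAt_sum_inner_Jm_Jp N ωa ωb ωab hcauchy x y δ).const_mul (μ * h)
  simp only [sum_add_distrib]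
  refine (hLag.sub hInt).congr_deriv ?_
  rw [← sum_add_distrib, mul_sum, ← sum_sub_distrib]
  refine sum_eq_zero fun k hk => ?_
  rw [mem_range] at hk
  obtain rfl | rfl | ⟨hk1, hkN⟩ : k = 0 ∨ k = N ∨ 1 ≤ k ∧ k ≤ N - 1 := by omega
  · simp [hδ0]
  · simp [hδN]
  · rw [hELx k hk1 hkN, hELy k hk1 hkN]
    ring

/-- Sufficiency of the restricted discrete fractional Euler–Lagrange equations: if the
discrete Euler–Lagrange equations with fractional forcing hold for `k = 1,…,N-1`, then the
restricted first variation of the discrete action vanishes. -/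
theorem restricted_discrete_EL_sufficient {d N : ℕ} (hN : 2 ≤ N) (μ h : ℝ)
    (hμ : 0 < μ) (hh : 0 < h)
    (Ld : EuclideanSpace ℝ (Fin d) → EuclideanSpace ℝ (Fin d) → ℝ)
    (hLd : Differentiable ℝ
      (fun p : EuclideanSpace ℝ (Fin d) × EuclideanSpace ℝ (Fin d) => Ld p.1 p.2))
    (ωa ωb ωab : ℕ → ℝ)
    (hcauchy : ∀ n, ∑ j ∈ Finset.range (n + 1), ωa j * ωb (n - j) = ωab n)
    (x y : ℕ → EuclideanSpace ℝ (Fin d))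
    (hELx : ∀ k, 1 ≤ k → k ≤ N - 1 → ∀ v : EuclideanSpace ℝ (Fin d),
      fderiv ℝ (fun a => Ld a (x (k + 1))) (x k) v
          + fderiv ℝ (fun b => Ld (x (k - 1)) b) (x k) v
        = μ * h * (inner ℝ (Jm ωab x k) v : ℝ))
    (hELy : ∀ k, 1 ≤ k → k ≤ N - 1 → ∀ v : EuclideanSpace ℝ (Fin d),
      fderiv ℝ (fun a => Ld a (y (k + 1))) (y k) v
          + fderiv ℝ (fun b => Ld (y (k - 1)) b) (y k) v
        = μ * h * (inner ℝ (Jp N ωab y k) v : ℝ)) :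
    ∀ δx : ℕ → EuclideanSpace ℝ (Fin d), δx 0 = 0 → δx N = 0 →
      HasDerivAt (fun ε : ℝ =>
        (∑ k ∈ Finset.range N,
          (Ld (x k + ε • δx k) (x (k + 1) + ε • δx (k + 1))
            + Ld (y k + ε • δx k) (y (k + 1) + ε • δx (k + 1))))
        - μ * h * ∑ k ∈ Finset.range (N + 1),
            (inner ℝ (Jm ωa (fun j => x j + ε • δx j) k)
                   (Jp N ωb (fun j => y j + ε • δx j) k) : ℝ)) 0 0 :=
  restricted_discrete_EL_sufficient_general μ h Ld hLd ωa ωb ωab hcauchy x y hELx hELy
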